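/- arXiv:2301.07511 — 2 statements merged into one kernel-verified Lean document; each statement's English description precedes it below -/
import Mathlib

section
/- If $A$ is a noetherian self-injective (quasi-Frobenius) ring, then the global dimension of $A$ is either zero or infinite. -/
variable {A : Type} [Ring A]

/-- Over a noetherian self-injective ring, the free module `ι →₀ A` is injective. -/
lemma finsupp_injective [IsNoetherianRing A] (hself : Module.Injective A A) (ι : Type) :
    Module.Injective A (ι →₀ A) := by
  classical
  have hbaer : Module.Baer A A := Module.Baer.of_injective hself
  refine Module.Baer.injective (R := A) (Q := ι →₀ A) ?_
  intro I g
  obtain ⟨S, hS⟩ : I.FG := IsNoetherian.noetherian I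
  set s : Finset ι := S.biUnion (fun x => if h : x ∈ I then (g ⟨x, h⟩).support else ∅) with hs
  have hsupp : ∀ (a : A) (ha : a ∈ I), (g ⟨a, ha⟩).support ⊆ s := by
    have : ∀ a ∈ Submodule.span A (S : Set A), ∀ (ha : a ∈ I),
        (g ⟨a, ha⟩).support ⊆ s := by
      intro a hmem
      induction hmem using Submodule.span_induction with
      | mem y hy =>
          intro ha j hj
          refine Finset.mem_biUnion.2 ⟨y, hy, ?_⟩
          rw [dif_pos ha]
          exact hj
      | zero =>
          intro ha
          have : g ⟨0, ha⟩ = 0 := by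
            have : (⟨0, ha⟩ : I) = 0 := rfl
            rw [this, map_zero]
          simp [this]
      | add x y hx hy ihx ihy =>
          intro ha j hj
          have hxI : x ∈ I := hS ▸ hx
          have hyI : y ∈ I := hS ▸ hy
          have : g ⟨x + y, ha⟩ = g ⟨x, hxI⟩ + g ⟨y, hyI⟩ := by
            rw [← map_add]; congr
          rw [this] at hj
          rcases Finset.mem_union.1 (Finsupp.support_add hj) with h | h
          · exact ihx hxI h
          · exact ihy hyI h
      | smul r x hx ihx =>
          intro ha j hj
          have hxI : x ∈ I := hS ▸ hx
          have : g ⟨r • x, ha⟩ = r • g ⟨x, hxI⟩ := by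
            rw [← map_smul]; congr
          rw [this] at hj
          exact ihx hxI (Finsupp.support_smul hj)
    intro a ha
    exact this a (by rw [← hS] at ha; exact ha) ha
  -- extend each coordinate
  have hcoord : ∀ i : ι, ∃ φ : A →ₗ[A] A, ∀ (x : A) (hx : x ∈ I),
      φ x = g ⟨x, hx⟩ i := by
    intro i
    obtain ⟨φ, hφ⟩ := hbaer I ((Finsupp.lapply i) ∘ₗ g)
    exact ⟨φ, fun x hx => hφ x hx⟩
  choose φ hφ using hcoord
  refine ⟨{ toFun := fun a => ∑ i ∈ s, Finsupp.single i (φ i a)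
            map_add' := ?_
            map_smul' := ?_ }, ?_⟩
  · intro a b; simp [map_add, Finsupp.single_add, Finset.sum_add_distrib]
  · intro r a
    simp only [RingHom.id_apply, map_smul, Finset.smul_sum, ← Finsupp.smul_single]
  · intro x hx
    simp only [LinearMap.coe_mk, AddHom.coe_mk]
    ext j
    rw [Finset.sum_apply']
    by_cases hj : j ∈ s
    · rw [Finset.sum_eq_single j (fun i _ hij => Finsupp.single_eq_of_ne' hij)
        (fun h => absurd hj h), Finsupp.single_eq_same, hφ j x hx]
    · have h1 : g ⟨x, hx⟩ j = 0 := Finsupp.notMem_support_iff.1 (fun h => hj (hsupp x hx h))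
      rw [h1]
      refine Finset.sum_eq_zero fun i hi => ?_
      exact Finsupp.single_eq_of_ne' (fun h => hj (h ▸ hi))

/-- A retract of an injective module is injective. -/
lemma injective_of_retract {N M : Type} [AddCommGroup N] [Module A N]
    [AddCommGroup M] [Module A M] (hN : Module.Injective A N)
    (i : M →ₗ[A] N) (p : N →ₗ[A] M) (hpi : p ∘ₗ i = LinearMap.id) :
    Module.Injective A M := by
  constructor
  intro X Y _ _ _ _ f hf g
  obtain ⟨h, hh⟩ := hN.out f hf (i ∘ₗ g)
  refine ⟨p ∘ₗ h, fun x => ?_⟩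
  have := hh x
  simp only [LinearMap.comp_apply] at this ⊢
  rw [this, ← LinearMap.comp_apply, hpi, LinearMap.id_apply]

/-- Over a noetherian self-injective ring, projective modules are injective. -/
lemma injective_of_projective [IsNoetherianRing A] (hself : Module.Injective A A)
    {M : Type} [AddCommGroup M] [Module A M] (hM : Module.Projective A M) :
    Module.Injective A M := by
  obtain ⟨s, hs⟩ := hM.out
  exact injective_of_retract (finsupp_injective hself M) s
    (Finsupp.linearCombination A id) (by ext x; exact hs x)

/-- If `f : P → M` is surjective with `P` projective and `ker f` injective, `M` is projective. -/
lemma proj_of_split {P M : Type} [AddCommGroup P] [Module A P] [AddCommGroup M] [Module A M]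
    (hP : Module.Projective A P) (f : P →ₗ[A] M) (hf : Function.Surjective f)
    (hker : Module.Injective A (LinearMap.ker f)) : Module.Projective A M := by
  obtain ⟨π, hπ⟩ := hker.out (LinearMap.ker f).subtype (Submodule.injective_subtype _)
    LinearMap.id
  -- q := id - subtype ∘ π vanishes on ker f
  set q : P →ₗ[A] P := LinearMap.id - (LinearMap.ker f).subtype ∘ₗ π with hq
  have hker_le : LinearMap.ker f ≤ LinearMap.ker q := by
    intro x hx
    have h2 : ((π x : LinearMap.ker f) : P) = x := congrArg Subtype.val (hπ ⟨x, hx⟩)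
    simp [hq, h2]
  let e := f.quotKerEquivOfSurjective hf
  let s : M →ₗ[A] P := (Submodule.liftQ _ q hker_le) ∘ₗ (e.symm : M →ₗ[A] P ⧸ LinearMap.ker f)
  have hfs : f ∘ₗ s = LinearMap.id := by
    ext m
    obtain ⟨p, rfl⟩ := hf m
    obtain ⟨p', hp'⟩ := Submodule.Quotient.mk_surjective (LinearMap.ker f) (e.symm (f p))
    have hfp : f p' = f p := by
      have h3 := congrArg e hp'
      rw [e.apply_symm_apply] at h3
      have h2 : e (Submodule.Quotient.mk p') = f p' := rfl
      rw [h2] at h3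
      exact h3
    simp only [LinearMap.comp_apply, LinearMap.id_apply, s, LinearEquiv.coe_coe, ← hp',
      Submodule.liftQ_apply]
    have h4 : f (q p') = f p' := by
      simp only [hq, LinearMap.sub_apply, LinearMap.id_apply, map_sub, LinearMap.comp_apply]
      have h5 : ((LinearMap.ker f).subtype (π p')) ∈ LinearMap.ker f := (π p').2
      rw [LinearMap.mem_ker] at h5
      rw [h5, sub_zero]
    rw [h4, hfp]
  exact Module.Projective.of_split (M := P) s f (by ext m; exact congrFun (congrArg _ hfs) m)

/-- `pdLE R n M` means that `M` admits a projective resolution of length at most `n`,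
i.e. the projective dimension of `M` over `R` is at most `n`. -/
def pdLE (R : Type) [Ring R] : ℕ → ∀ (M : Type) [AddCommGroup M] [Module R M], Prop
  | 0, M, _, _ => Module.Projective R M
  | n + 1, M, _, _ => ∃ (P : Type) (_ : AddCommGroup P) (_ : Module R P)
      (f : P →ₗ[R] M), Module.Projective R P ∧ Function.Surjective f ∧
        pdLE R n (LinearMap.ker f)

lemma pdLE_proj [IsNoetherianRing A] (hself : Module.Injective A A) :
    ∀ (n : ℕ) (M : Type) [AddCommGroup M] [Module A M], pdLE A n M → Module.Projective A M := by
  intro n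
  induction n with
  | zero => intro M _ _ h; exact h
  | succ n ih =>
      intro M _ _ h
      obtain ⟨P, _, _, f, hP, hf, hk⟩ := h
      exact proj_of_split hP f hf (injective_of_projective hself (ih _ hk))

/-- If `A` is a noetherian self-injective (quasi-Frobenius) ring, then the global
dimension of `A` is either zero (every module is projective) or infinite (for every
`n` there is a module with no projective resolution of length `≤ n`). -/
theorem stmt_1 (A : Type) [Ring A] [IsNoetherianRing A] (hself : Module.Injective A A) :
    (∀ (M : Type) [AddCommGroup M] [Module A M], Module.Projective A M) ∨
      (∀ n : ℕ, ∃ (M : Type) (_ : AddCommGroup M) (_ : Module A M), ¬ pdLE A n M) := by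
  by_cases h : ∀ (M : Type) [AddCommGroup M] [Module A M], Module.Projective A M
  · exact Or.inl h
  · push_neg at h
    obtain ⟨M, _, _, hM⟩ := h
    exact Or.inr fun n => ⟨M, _, _, fun hpd => hM (pdLE_proj hself n M hpd)⟩
end

section
/- For $k$-algebras $A$ and $B$ and any $n \in \mathbb{N}$, the Hochschild homology of the product algebra satisfies $HH_n(A \times B) \cong HH_n(A) \oplus HH_n(B)$. -/
open CategoryTheory TensorProduct MulOpposite

noncomputable section

section HochschildSetup

variable (k : Type) [Field k] (A : Type) [Ring A] [Algebra k A]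

/-- `A` is a module over its enveloping algebra `A ⊗[k] Aᵐᵒᵖ`,
via `(a ⊗ bᵒᵖ) • x = a * x * b`. -/
instance : Module (A ⊗[k] Aᵐᵒᵖ) A := TensorProduct.Algebra.module

open ModuleCat in
/-- The commutator subspace `[A, M]` of an `A`-bimodule `M`,
spanned by the elements `a • m - m • a`. -/
def commSub (M : ModuleCat.{0} (A ⊗[k] Aᵐᵒᵖ)) : Submodule k M :=
  Submodule.span k
    {x : M | ∃ (a : A) (m : M), x = (a ⊗ₜ[k] (1 : Aᵐᵒᵖ)) • m - ((1 : A) ⊗ₜ[k] op a) • m}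

open ModuleCat in
/-- The coinvariants functor `M ↦ M/[A,M] = M ⊗_{A ⊗[k] Aᵐᵒᵖ} A`, whose left derived
functors compute Hochschild homology `HH_n(A, M) = Tor_n^{A ⊗[k] Aᵐᵒᵖ}(M, A)`. -/
def commQuot : ModuleCat.{0} (A ⊗[k] Aᵐᵒᵖ) ⥤ ModuleCat.{0} k where
  obj M := ModuleCat.of k (M ⧸ commSub k A M)
  map {M N} f := ModuleCat.ofHom <| Submodule.mapQ (commSub k A M) (commSub k A N) (f.hom.restrictScalars k) <| by
    rw [commSub, Submodule.span_le]
    rintro x ⟨a, m, rfl⟩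
    refine Submodule.subset_span ⟨a, f m, ?_⟩
    simp [map_sub, f.hom.map_smul]
  map_id M := ModuleCat.hom_ext <| Submodule.linearMap_qext _ rfl
  map_comp f g := ModuleCat.hom_ext <| Submodule.linearMap_qext _ rfl

open ModuleCat in
instance : (commQuot k A).Additive := ⟨ModuleCat.hom_ext <| Submodule.linearMap_qext _ rfl⟩

/-- The Hochschild homology functor in the coefficient bimodule:
`HH_n(A, -) = Tor_n^{A ⊗[k] Aᵐᵒᵖ}(-, A)`, computed as the `n`-th left derived functor
of the coinvariants functor. -/
def HHfun (n : ℕ) : ModuleCat.{0} (A ⊗[k] Aᵐᵒᵖ) ⥤ ModuleCat.{0} k :=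
  (commQuot k A).leftDerived n

/-- The Hochschild homology `HH_n(A, M) = Tor_n^{A ⊗[k] Aᵐᵒᵖ}(M, A)`. -/
def HHmod (n : ℕ) (M : ModuleCat.{0} (A ⊗[k] Aᵐᵒᵖ)) : ModuleCat.{0} k :=
  (HHfun k A n).obj M

/-- The Hochschild homology `HH_n(A) = HH_n(A, A)`. -/
def HHa (n : ℕ) : ModuleCat.{0} k :=
  HHmod k A n (ModuleCat.of (A ⊗[k] Aᵐᵒᵖ) A)

/-- The Hochschild cohomology `HH^n(A, M) = Ext^n_{A ⊗[k] Aᵐᵒᵖ}(A, M)`. -/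
def HHcoh (n : ℕ) (M : ModuleCat.{0} (A ⊗[k] Aᵐᵒᵖ)) : ModuleCat.{0} k :=
  ((Ext k (ModuleCat.{0} (A ⊗[k] Aᵐᵒᵖ)) n).obj
    (Opposite.op (ModuleCat.of (A ⊗[k] Aᵐᵒᵖ) A))).obj M

/-- The Hochschild cohomology `HH^n(A) = HH^n(A, A)`. -/
def HHca (n : ℕ) : ModuleCat.{0} k :=
  HHcoh k A n (ModuleCat.of (A ⊗[k] Aᵐᵒᵖ) A)

end HochschildSetup

/-! ### Auxiliary general results -/

section DerivedAux

open CategoryTheory CategoryTheory.Limits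

attribute [local instance] ModuleCat.moduleOfAlgebraModule
  ModuleCat.isScalarTower_of_algebra_moduleCat

instance Functor.mapHomotopyCategory_additive {V W : Type*} [Category V] [Category W]
    [Preadditive V] [Preadditive W] (F : V ⥤ W) [F.Additive] {ι : Type*} (c : ComplexShape ι) :
    (F.mapHomotopyCategory c).Additive where
  map_add {X Y f g} := by
    obtain ⟨f', rfl⟩ := (HomotopyCategory.quotient V c).map_surjective f
    obtain ⟨g', rfl⟩ := (HomotopyCategory.quotient V c).map_surjective g
    exact Functor.map_add _

instance projectiveResolutions_additive {C : Type*} [Category C] [Abelian C]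
    [HasProjectiveResolutions C] : (projectiveResolutions C).Additive where
  map_add {X Y f g} := by
    dsimp [projectiveResolutions]
    refine Eq.trans ?_ ((HomotopyCategory.quotient C _).map_add)
    apply HomotopyCategory.eq_of_homotopy
    apply ProjectiveResolution.liftHomotopy (f + g)
    · rw [ProjectiveResolution.lift_commutes]
    · simp only [Preadditive.add_comp, ProjectiveResolution.lift_commutes, Functor.map_add,
        Preadditive.comp_add]

instance Functor.leftDerivedToHomotopyCategory_additive {C D : Type*} [Category C] [Category D]
    [Abelian C] [Abelian D] [HasProjectiveResolutions C] (F : C ⥤ D) [F.Additive] :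
    (F.leftDerivedToHomotopyCategory).Additive :=
  inferInstanceAs ((projectiveResolutions C ⋙ F.mapHomotopyCategory _).Additive)

instance Functor.leftDerived_additive {C D : Type*} [Category C] [Category D] [Abelian C]
    [Abelian D] [HasProjectiveResolutions C] (F : C ⥤ D) [F.Additive] (n : ℕ) :
    (F.leftDerived n).Additive :=
  inferInstanceAs ((F.leftDerivedToHomotopyCategory ⋙
    HomotopyCategory.homologyFunctor D _ n).Additive)

/-- An exact functor preserving projective objects maps a projective resolution to a
projective resolution. -/
noncomputable def mapProjRes {C D : Type*} [Category C] [Category D] [Abelian C] [Abelian D]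
    (G : C ⥤ D) [G.Additive] [G.PreservesHomology]
    (hG : ∀ (P : C), Projective P → Projective (G.obj P))
    {X : C} (P : ProjectiveResolution X) : ProjectiveResolution (G.obj X) where
  complex := (G.mapHomologicalComplex _).obj P.complex
  projective n := hG _ (P.projective n)
  π := (G.mapHomologicalComplex _).map P.π ≫
    (HomologicalComplex.singleMapHomologicalComplex G (ComplexShape.down ℕ) 0).hom.app X
  quasiIso := inferInstance

/-- Computing a left derived functor after precomposing with an exact functor that preserves
projective objects. -/
noncomputable def leftDerivedCompIso {C D E : Type*} [Category C] [Category D] [Category E]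
    [Abelian C] [Abelian D] [Abelian E] [EnoughProjectives C] [EnoughProjectives D]
    (G : C ⥤ D) (F : D ⥤ E) [G.Additive] [F.Additive] [G.PreservesHomology]
    (hG : ∀ (P : C), Projective P → Projective (G.obj P)) (n : ℕ) (X : C) :
    (F.leftDerived n).obj (G.obj X) ≅ ((G ⋙ F).leftDerived n).obj X :=
  ((mapProjRes G hG (ProjectiveResolution.of X)).isoLeftDerivedObj F n) ≪≫
    ((ProjectiveResolution.of X).isoLeftDerivedObj (G ⋙ F) n).symm

/-- Left derived functors of naturally isomorphic functors are naturally isomorphic. -/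
noncomputable def natIsoLeftDerived {C D : Type*} [Category C] [Category D] [Abelian C]
    [Abelian D] [HasProjectiveResolutions C] {F F' : C ⥤ D} [F.Additive] [F'.Additive]
    (α : F ≅ F') (n : ℕ) : F.leftDerived n ≅ F'.leftDerived n where
  hom := NatTrans.leftDerived α.hom n
  inv := NatTrans.leftDerived α.inv n
  hom_inv_id := by rw [← NatTrans.leftDerived_comp, α.hom_inv_id, NatTrans.leftDerived_id]
  inv_hom_id := by rw [← NatTrans.leftDerived_comp, α.inv_hom_id, NatTrans.leftDerived_id]

section RestrictScalars

variable {R S : Type} [Ring R] [Ring S] (f : R →+* S)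

instance : (ModuleCat.restrictScalars.{0} f).Additive where
  map_add := rfl

instance : (ModuleCat.restrictScalars.{0} f).PreservesHomology where
  preservesKernels {X Y} g := ModuleCat.preservesLimit_restrictScalars f _
  preservesCokernels {X Y} g := inferInstance

/-- If `S` is projective as an `R`-module (via `f`), then restriction of scalars along `f`
preserves projective objects. -/
theorem restrictScalars_projective
    (h : Module.Projective R ((ModuleCat.restrictScalars.{0} f).obj (ModuleCat.of S S)))
    (P : ModuleCat.{0} S) (hP : Projective P) :
    Projective ((ModuleCat.restrictScalars f).obj P) := by
  have : (ModuleCat.coextendScalars f).PreservesEpimorphisms := by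
    constructor
    intro M N g hg
    rw [ModuleCat.epi_iff_surjective] at hg ⊢
    intro φ
    obtain ⟨ψ, hψ⟩ := Module.projective_lifting_property (h := h) g.hom φ hg
    exact ⟨ψ, hψ⟩
  exact (ModuleCat.restrictCoextendScalarsAdj f).map_projective P hP

end RestrictScalars

end DerivedAux

/-! ### Comparison of the coinvariants functors -/

section Compare

open CategoryTheory CategoryTheory.Limits ModuleCat

attribute [local instance] ModuleCat.moduleOfAlgebraModule
  ModuleCat.isScalarTower_of_algebra_moduleCat

variable (k : Type) [Field k] (A B : Type) [Ring A] [Algebra k A] [Ring B] [Algebra k B]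

/-- The canonical projection of enveloping algebras. -/
def projEnv : ((A × B) ⊗[k] (A × B)ᵐᵒᵖ) →ₐ[k] (A ⊗[k] Aᵐᵒᵖ) :=
  Algebra.TensorProduct.map (AlgHom.fst k A B) (AlgHom.op (AlgHom.fst k A B))

@[simp] lemma opFst_apply (q : (A × B)ᵐᵒᵖ) :
    (AlgHom.op (AlgHom.fst k A B)) q = op (unop q).1 := rfl

@[simp] lemma projEnv_tmul (p : A × B) (q : (A × B)ᵐᵒᵖ) :
    projEnv k A B (p ⊗ₜ[k] q) = p.1 ⊗ₜ[k] op (unop q).1 := rfl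

/-- The identity map, as a `k`-linear map from a restricted module. -/
def resId {R' S' : Type} [Ring R'] [Ring S'] [Algebra k R'] [Algebra k S'] (φ : R' →ₐ[k] S')
    (M : ModuleCat.{0} S') :
    ((ModuleCat.restrictScalars φ.toRingHom).obj M : Type) →ₗ[k] M where
  toFun := id
  map_add' _ _ := rfl
  map_smul' c x := show φ (algebraMap k R' c) • x = algebraMap k S' c • x by
    rw [φ.commutes]

/-- The identity map, as a `k`-linear map into a restricted module. -/
def resId' {R' S' : Type} [Ring R'] [Ring S'] [Algebra k R'] [Algebra k S'] (φ : R' →ₐ[k] S')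
    (M : ModuleCat.{0} S') :
    (M : Type) →ₗ[k] ((ModuleCat.restrictScalars φ.toRingHom).obj M : Type) where
  toFun := id
  map_add' _ _ := rfl
  map_smul' c x := (show φ (algebraMap k R' c) • x = algebraMap k S' c • x by
    rw [φ.commutes]).symm

set_option maxHeartbeats 1000000 in
lemma commSub_le_comap (M : ModuleCat.{0} (A ⊗[k] Aᵐᵒᵖ)) :
    commSub k (A × B) ((ModuleCat.restrictScalars (projEnv k A B).toRingHom).obj M) ≤
      (commSub k A M).comap (resId k (projEnv k A B) M) := by
  rw [commSub, Submodule.span_le]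
  rintro x ⟨p, m, rfl⟩
  refine Submodule.mem_comap.2 (Submodule.subset_span ⟨p.1, m, ?_⟩)
  show (p ⊗ₜ[k] (1 : (A × B)ᵐᵒᵖ)) • m - ((1 : A × B) ⊗ₜ[k] op p) • m = _
  rw [ModuleCat.restrictScalars.smul_def, ModuleCat.restrictScalars.smul_def]
  show (projEnv k A B) (p ⊗ₜ[k] (1 : (A × B)ᵐᵒᵖ)) • m -
    (projEnv k A B) ((1 : A × B) ⊗ₜ[k] op p) • m = _
  simp
  rfl

set_option maxHeartbeats 1000000 in
lemma comap_le_commSub (M : ModuleCat.{0} (A ⊗[k] Aᵐᵒᵖ)) :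
    commSub k A M ≤
      (commSub k (A × B) ((ModuleCat.restrictScalars (projEnv k A B).toRingHom).obj M)).comap
        (resId' k (projEnv k A B) M) := by
  rw [commSub, Submodule.span_le]
  rintro x ⟨a, m, rfl⟩
  refine Submodule.mem_comap.2 (Submodule.subset_span ⟨((a, 0) : A × B),
    (m : ((ModuleCat.restrictScalars (projEnv k A B).toRingHom).obj M)), ?_⟩)
  show (a ⊗ₜ[k] (1 : Aᵐᵒᵖ)) • m - ((1 : A) ⊗ₜ[k] op a) • m =
      ((projEnv k A B) (((a, 0) : A × B) ⊗ₜ[k] (1 : (A × B)ᵐᵒᵖ))) • m -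
      ((projEnv k A B) ((1 : A × B) ⊗ₜ[k] op ((a, 0) : A × B))) • m
  simp

set_option maxHeartbeats 1000000 in
/-- The coinvariants of a restricted bimodule agree with the original coinvariants. -/
noncomputable def commEquiv (M : ModuleCat.{0} (A ⊗[k] Aᵐᵒᵖ)) :
    ((commQuot k (A × B)).obj
        ((ModuleCat.restrictScalars (projEnv k A B).toRingHom).obj M) : Type) ≃ₗ[k]
      ((commQuot k A).obj M : Type) :=
  LinearEquiv.ofLinear
    (Submodule.mapQ _ _ (resId k (projEnv k A B) M) (commSub_le_comap k A B M))
    (Submodule.mapQ _ _ (resId' k (projEnv k A B) M) (comap_le_commSub k A B M))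
    (Submodule.linearMap_qext _ rfl)
    (Submodule.linearMap_qext _ rfl)

set_option maxHeartbeats 1000000 in
set_option synthInstance.maxHeartbeats 400000 in
/-- Restricting along `projEnv` and taking coinvariants computes the coinvariants over `A`. -/
noncomputable def commQuotCompIso :
    ModuleCat.restrictScalars (projEnv k A B).toRingHom ⋙ commQuot k (A × B) ≅ commQuot k A :=
  NatIso.ofComponents (fun M => (commEquiv k A B M).toModuleIso)
    (fun {M N} f => ModuleCat.hom_ext <| Submodule.linearMap_qext _ rfl)

end Compare

/-! ### Projectivity of the enveloping algebra factor -/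

section ProjFactor

open CategoryTheory ModuleCat

variable (k : Type) [Field k] (A B : Type) [Ring A] [Algebra k A] [Ring B] [Algebra k B]

/-- The `k`-linear section of `projEnv`. -/
def secEnv₀ : (A ⊗[k] Aᵐᵒᵖ) →ₗ[k] ((A × B) ⊗[k] (A × B)ᵐᵒᵖ) :=
  TensorProduct.map (LinearMap.inl k A B)
    ((opLinearEquiv k).toLinearMap ∘ₗ (LinearMap.inl k A B) ∘ₗ (opLinearEquiv k).symm.toLinearMap)

lemma secEnv₀_tmul (a : A) (a' : Aᵐᵒᵖ) :
    secEnv₀ k A B (a ⊗ₜ[k] a') = ((a, 0) : A × B) ⊗ₜ[k] (op ((unop a', 0) : A × B)) := rfl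

lemma secEnv₀_smul (r : (A × B) ⊗[k] (A × B)ᵐᵒᵖ) (x : A ⊗[k] Aᵐᵒᵖ) :
    secEnv₀ k A B ((projEnv k A B r) * x) = r * secEnv₀ k A B x := by
  induction r using TensorProduct.induction_on with
  | zero => simp
  | add u v hu hv => simp [add_mul, hu, hv]
  | tmul p q =>
    induction x using TensorProduct.induction_on with
    | zero => simp
    | add u v hu hv => simp only [mul_add, map_add, hu, hv]
    | tmul c c' =>
      simp only [Algebra.TensorProduct.tmul_mul_tmul, projEnv_tmul, secEnv₀_tmul]
      congr 1
      · simp [Prod.ext_iff]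
      · apply unop_injective
        simp [Prod.ext_iff]

set_option maxHeartbeats 1000000 in
set_option synthInstance.maxHeartbeats 1000000 in
/-- `A ⊗[k] Aᵐᵒᵖ`, as a module over `(A × B) ⊗[k] (A × B)ᵐᵒᵖ` via `projEnv`,
is projective. -/
theorem projective_env_factor :
    Module.Projective ((A × B) ⊗[k] (A × B)ᵐᵒᵖ)
      ((ModuleCat.restrictScalars (projEnv k A B).toRingHom).obj
        (ModuleCat.of (A ⊗[k] Aᵐᵒᵖ) (A ⊗[k] Aᵐᵒᵖ))) := by
  refine Module.Projective.of_split
    (M := ((A × B) ⊗[k] (A × B)ᵐᵒᵖ))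
    ({ toFun := secEnv₀ k A B
       map_add' := map_add _
       map_smul' := fun r x => by
         exact (secEnv₀_smul k A B r x) })
    ({ toFun := projEnv k A B
       map_add' := map_add _
       map_smul' := fun r x => map_mul (projEnv k A B) r x })
    ?_
  ext x
  show (projEnv k A B) (secEnv₀ k A B x) = x
  induction x using TensorProduct.induction_on with
  | zero => simp
  | add u v hu hv => simp [hu, hv]
  | tmul a a' =>
    rw [secEnv₀_tmul, projEnv_tmul]
    simp

end ProjFactor

/-! ### The `B`-side versions -/

section SideB

open CategoryTheory CategoryTheory.Limits ModuleCat

attribute [local instance] ModuleCat.moduleOfAlgebraModule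
  ModuleCat.isScalarTower_of_algebra_moduleCat

variable (k : Type) [Field k] (A B : Type) [Ring A] [Algebra k A] [Ring B] [Algebra k B]

/-- The canonical projection of enveloping algebras, second factor. -/
def projEnvB : ((A × B) ⊗[k] (A × B)ᵐᵒᵖ) →ₐ[k] (B ⊗[k] Bᵐᵒᵖ) :=
  Algebra.TensorProduct.map (AlgHom.snd k A B) (AlgHom.op (AlgHom.snd k A B))

@[simp] lemma opSnd_apply (q : (A × B)ᵐᵒᵖ) :
    (AlgHom.op (AlgHom.snd k A B)) q = op (unop q).2 := rfl

@[simp] lemma projEnvB_tmul (p : A × B) (q : (A × B)ᵐᵒᵖ) :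
    projEnvB k A B (p ⊗ₜ[k] q) = p.2 ⊗ₜ[k] op (unop q).2 := rfl

set_option maxHeartbeats 1000000 in
lemma commSubB_le_comap (M : ModuleCat.{0} (B ⊗[k] Bᵐᵒᵖ)) :
    commSub k (A × B) ((ModuleCat.restrictScalars (projEnvB k A B).toRingHom).obj M) ≤
      (commSub k B M).comap (resId k (projEnvB k A B) M) := by
  rw [commSub, Submodule.span_le]
  rintro x ⟨p, m, rfl⟩
  refine Submodule.mem_comap.2 (Submodule.subset_span ⟨p.2, m, ?_⟩)
  show (p ⊗ₜ[k] (1 : (A × B)ᵐᵒᵖ)) • m - ((1 : A × B) ⊗ₜ[k] op p) • m = _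
  rw [ModuleCat.restrictScalars.smul_def, ModuleCat.restrictScalars.smul_def]
  show (projEnvB k A B) (p ⊗ₜ[k] (1 : (A × B)ᵐᵒᵖ)) • m -
    (projEnvB k A B) ((1 : A × B) ⊗ₜ[k] op p) • m = _
  simp
  rfl

set_option maxHeartbeats 1000000 in
lemma comap_le_commSubB (M : ModuleCat.{0} (B ⊗[k] Bᵐᵒᵖ)) :
    commSub k B M ≤
      (commSub k (A × B) ((ModuleCat.restrictScalars (projEnvB k A B).toRingHom).obj M)).comap
        (resId' k (projEnvB k A B) M) := by
  rw [commSub, Submodule.span_le]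
  rintro x ⟨b, m, rfl⟩
  refine Submodule.mem_comap.2 (Submodule.subset_span ⟨((0, b) : A × B),
    (m : ((ModuleCat.restrictScalars (projEnvB k A B).toRingHom).obj M)), ?_⟩)
  show (b ⊗ₜ[k] (1 : Bᵐᵒᵖ)) • m - ((1 : B) ⊗ₜ[k] op b) • m =
      ((projEnvB k A B) (((0, b) : A × B) ⊗ₜ[k] (1 : (A × B)ᵐᵒᵖ))) • m -
      ((projEnvB k A B) ((1 : A × B) ⊗ₜ[k] op ((0, b) : A × B))) • m
  simp

set_option maxHeartbeats 1000000 in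
/-- The coinvariants of a restricted bimodule agree with the original coinvariants. -/
noncomputable def commEquivB (M : ModuleCat.{0} (B ⊗[k] Bᵐᵒᵖ)) :
    ((commQuot k (A × B)).obj
        ((ModuleCat.restrictScalars (projEnvB k A B).toRingHom).obj M) : Type) ≃ₗ[k]
      ((commQuot k B).obj M : Type) :=
  LinearEquiv.ofLinear
    (Submodule.mapQ _ _ (resId k (projEnvB k A B) M) (commSubB_le_comap k A B M))
    (Submodule.mapQ _ _ (resId' k (projEnvB k A B) M) (comap_le_commSubB k A B M))
    (Submodule.linearMap_qext _ rfl)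
    (Submodule.linearMap_qext _ rfl)

set_option maxHeartbeats 1000000 in
set_option synthInstance.maxHeartbeats 400000 in
/-- Restricting along `projEnvB` and taking coinvariants computes the coinvariants over `B`. -/
noncomputable def commQuotCompIsoB :
    ModuleCat.restrictScalars (projEnvB k A B).toRingHom ⋙ commQuot k (A × B) ≅ commQuot k B :=
  NatIso.ofComponents (fun M => (commEquivB k A B M).toModuleIso)
    (fun {M N} f => ModuleCat.hom_ext <| Submodule.linearMap_qext _ rfl)

/-- The `k`-linear section of `projEnvB`. -/
def secEnvB₀ : (B ⊗[k] Bᵐᵒᵖ) →ₗ[k] ((A × B) ⊗[k] (A × B)ᵐᵒᵖ) :=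
  TensorProduct.map (LinearMap.inr k A B)
    ((opLinearEquiv k).toLinearMap ∘ₗ (LinearMap.inr k A B) ∘ₗ (opLinearEquiv k).symm.toLinearMap)

lemma secEnvB₀_tmul (b : B) (b' : Bᵐᵒᵖ) :
    secEnvB₀ k A B (b ⊗ₜ[k] b') = ((0, b) : A × B) ⊗ₜ[k] (op ((0, unop b') : A × B)) := rfl

lemma secEnvB₀_smul (r : (A × B) ⊗[k] (A × B)ᵐᵒᵖ) (x : B ⊗[k] Bᵐᵒᵖ) :
    secEnvB₀ k A B ((projEnvB k A B r) * x) = r * secEnvB₀ k A B x := by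
  induction r using TensorProduct.induction_on with
  | zero => simp
  | add u v hu hv => simp [add_mul, hu, hv]
  | tmul p q =>
    induction x using TensorProduct.induction_on with
    | zero => simp
    | add u v hu hv => simp only [mul_add, map_add, hu, hv]
    | tmul c c' =>
      simp only [Algebra.TensorProduct.tmul_mul_tmul, projEnvB_tmul, secEnvB₀_tmul]
      congr 1
      · simp [Prod.ext_iff]
      · apply unop_injective
        simp [Prod.ext_iff]

set_option maxHeartbeats 1000000 in
set_option synthInstance.maxHeartbeats 1000000 in
/-- `B ⊗[k] Bᵐᵒᵖ`, as a module over `(A × B) ⊗[k] (A × B)ᵐᵒᵖ` via `projEnvB`,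
is projective. -/
theorem projective_env_factorB :
    Module.Projective ((A × B) ⊗[k] (A × B)ᵐᵒᵖ)
      ((ModuleCat.restrictScalars (projEnvB k A B).toRingHom).obj
        (ModuleCat.of (B ⊗[k] Bᵐᵒᵖ) (B ⊗[k] Bᵐᵒᵖ))) := by
  refine Module.Projective.of_split
    (M := ((A × B) ⊗[k] (A × B)ᵐᵒᵖ))
    ({ toFun := secEnvB₀ k A B
       map_add' := map_add _
       map_smul' := fun r x => by
         exact (secEnvB₀_smul k A B r x) })
    ({ toFun := projEnvB k A B
       map_add' := map_add _
       map_smul' := fun r x => map_mul (projEnvB k A B) r x })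
    ?_
  ext x
  show (projEnvB k A B) (secEnvB₀ k A B x) = x
  induction x using TensorProduct.induction_on with
  | zero => simp
  | add u v hu hv => simp [hu, hv]
  | tmul b b' =>
    rw [secEnvB₀_tmul, projEnvB_tmul]
    simp

end SideB

/-! ### Decomposition of `A × B` as a bimodule -/

section Decomp

open CategoryTheory CategoryTheory.Limits ModuleCat

variable (k : Type) [Field k] (A B : Type) [Ring A] [Algebra k A] [Ring B] [Algebra k B]

set_option maxHeartbeats 1000000 in
lemma smul_fst (r : (A × B) ⊗[k] (A × B)ᵐᵒᵖ) (x : A × B) :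
    (r • x).1 = projEnv k A B r • x.1 := by
  induction r using TensorProduct.induction_on with
  | zero => simp only [map_zero, zero_smul]; rfl
  | tmul p q =>
    show (p • q • x).1 = _
    rw [projEnv_tmul, TensorProduct.Algebra.smul_def]
    rfl
  | add u v hu hv => rw [add_smul, map_add, add_smul, Prod.fst_add, hu, hv]

set_option maxHeartbeats 1000000 in
lemma smul_snd (r : (A × B) ⊗[k] (A × B)ᵐᵒᵖ) (x : A × B) :
    (r • x).2 = projEnvB k A B r • x.2 := by
  induction r using TensorProduct.induction_on with
  | zero => simp only [map_zero, zero_smul]; rfl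
  | tmul p q =>
    show (p • q • x).2 = _
    rw [projEnvB_tmul, TensorProduct.Algebra.smul_def]
    rfl
  | add u v hu hv => rw [add_smul, map_add, add_smul, Prod.snd_add, hu, hv]

set_option maxHeartbeats 1000000 in
/-- The decomposition of `A × B` as a module over its enveloping algebra. -/
noncomputable def prodDecomp :
    ((ModuleCat.of ((A × B) ⊗[k] (A × B)ᵐᵒᵖ) (A × B)) : Type) ≃ₗ[(A × B) ⊗[k] (A × B)ᵐᵒᵖ]
      (((ModuleCat.restrictScalars (projEnv k A B).toRingHom).obj
          (ModuleCat.of (A ⊗[k] Aᵐᵒᵖ) A) : Type) ×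
        ((ModuleCat.restrictScalars (projEnvB k A B).toRingHom).obj
          (ModuleCat.of (B ⊗[k] Bᵐᵒᵖ) B) : Type)) where
  toFun x := (x.1, x.2)
  invFun y := (y.1, y.2)
  map_add' _ _ := rfl
  map_smul' r x := Prod.ext (smul_fst k A B r x) (smul_snd k A B r x)
  left_inv _ := rfl
  right_inv _ := rfl

end Decomp

set_option maxHeartbeats 2000000 in
set_option synthInstance.maxHeartbeats 1000000 in
/-- For `k`-algebras `A` and `B`, Hochschild homology of the product algebra satisfies
`HH_n(A × B) ≅ HH_n(A) ⊕ HH_n(B)`. -/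
theorem stmt_2 (k : Type) [Field k] (A B : Type) [Ring A] [Algebra k A]
    [Ring B] [Algebra k B] (n : ℕ) :
    Nonempty ((HHa k (A × B) n) ≃ₗ[k] ((HHa k A n) × (HHa k B n))) := by
  let GA := ModuleCat.restrictScalars (projEnv k A B).toRingHom
  let GB := ModuleCat.restrictScalars (projEnvB k A B).toRingHom
  let L := (commQuot k (A × B)).leftDerived n
  have hGA : ∀ (P : ModuleCat.{0} (A ⊗[k] Aᵐᵒᵖ)), CategoryTheory.Projective P →
      CategoryTheory.Projective (GA.obj P) :=
    restrictScalars_projective _ (projective_env_factor k A B)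
  have hGB : ∀ (P : ModuleCat.{0} (B ⊗[k] Bᵐᵒᵖ)), CategoryTheory.Projective P →
      CategoryTheory.Projective (GB.obj P) :=
    restrictScalars_projective _ (projective_env_factorB k A B)
  haveI hL : L.Additive := inferInstanceAs (((commQuot k (A × B)).leftDerived n).Additive)
  haveI h1 : Limits.PreservesBiproductsOfShape Limits.WalkingPair L :=
    Limits.PreservesFiniteBiproducts.preserves
  haveI h2 : Limits.PreservesBinaryBiproducts L :=
    Limits.preservesBinaryBiproducts_of_preservesBiproducts L
  let e0 : ModuleCat.of ((A × B) ⊗[k] (A × B)ᵐᵒᵖ) (A × B) ≅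
      GA.obj (ModuleCat.of (A ⊗[k] Aᵐᵒᵖ) A) ⊞ GB.obj (ModuleCat.of (B ⊗[k] Bᵐᵒᵖ) B) :=
    (prodDecomp k A B).toModuleIso ≪≫ (ModuleCat.biprodIsoProd _ _).symm
  let eA : L.obj (GA.obj (ModuleCat.of (A ⊗[k] Aᵐᵒᵖ) A)) ≅ HHa k A n :=
    leftDerivedCompIso GA (commQuot k (A × B)) hGA n _ ≪≫
      (natIsoLeftDerived (commQuotCompIso k A B) n).app _
  let eB : L.obj (GB.obj (ModuleCat.of (B ⊗[k] Bᵐᵒᵖ) B)) ≅ HHa k B n :=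
    leftDerivedCompIso GB (commQuot k (A × B)) hGB n _ ≪≫
      (natIsoLeftDerived (commQuotCompIsoB k A B) n).app _
  exact ⟨(L.mapIso e0 ≪≫ Functor.mapBiprod L _ _ ≪≫
    CategoryTheory.Limits.biprod.mapIso eA eB ≪≫ ModuleCat.biprodIsoProd _ _).toLinearEquiv⟩
end
end
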